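/- For σ > 0 and integers λ ≥ 2, if n ≥ 2 then F(n) < F(1), where F(n) = (e^{−λ/(2σ²)}/n^λ)·∑_{k₁+...+kₙ=λ, kᵢ≥0} (λ choose k₁,...,kₙ)·e^{(∑ᵢkᵢ²)/(2σ²)} and F(1) = e^{(λ²−λ)/(2σ²)}. -/

import Mathlib

open Finset

lemma filter_eq_piAntidiag (l n : ℕ) :
    Finset.filter (fun k => ∑ i, k i = l)
      (Fintype.piFinset fun _ : Fin n => Finset.range (l + 1)) =
    Finset.piAntidiag Finset.univ l := by
  ext k
  simp only [mem_filter, Fintype.mem_piFinset, mem_range, mem_piAntidiag, mem_univ,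
    implies_true, and_true]
  constructor
  · rintro ⟨-, h⟩; exact h
  · intro h
    refine ⟨fun i => ?_, h⟩
    have : k i ≤ l := h ▸ Finset.single_le_sum (fun i _ => Nat.zero_le _) (mem_univ i)
    omega

lemma sum_multinom (l n : ℕ) :
    ∑ k ∈ Finset.piAntidiag (Finset.univ : Finset (Fin n)) l,
      (Nat.multinomial Finset.univ k : ℝ) = (n : ℝ) ^ l := by
  have := Finset.sum_pow_eq_sum_piAntidiag_of_commute (Finset.univ : Finset (Fin n))
    (fun _ => (1 : ℝ)) (fun _ _ _ _ _ => Commute.all _ _) l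
  simp at this
  simpa [Finset.noncommProd_eq_prod] using this.symm

/-- The multinomially-weighted exponential sum appearing in the shuffle Gaussian RDP. -/
noncomputable def shuffleSum (σ : ℝ) (l n : ℕ) : ℝ :=
  ∑ k ∈ Finset.filter (fun k => ∑ i, k i = l)
      (Fintype.piFinset fun _ : Fin n => Finset.range (l + 1)),
    (Nat.multinomial Finset.univ k : ℝ) * Real.exp ((∑ i, (k i : ℝ) ^ 2) / (2 * σ ^ 2))

/-- The shuffle Gaussian moment quantity
`F(n) = (e^{-λ/(2σ²)}/n^λ) ⬝ ∑ multinomial ⬝ e^{∑kᵢ²/(2σ²)}`. -/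
noncomputable def shuffleF (σ : ℝ) (l n : ℕ) : ℝ :=
  Real.exp (-(l : ℝ) / (2 * σ ^ 2)) / (n : ℝ) ^ l * shuffleSum σ l n

theorem shuffleF_lt_of_two_le (σ : ℝ) (hσ : 0 < σ) (l : ℕ) (hl : 2 ≤ l)
    (n : ℕ) (hn : 2 ≤ n) :
    shuffleF σ l n < Real.exp (((l : ℝ) ^ 2 - l) / (2 * σ ^ 2)) := by
  obtain ⟨m, rfl⟩ : ∃ m, n = m + 2 := ⟨n - 2, by omega⟩
  set n := m + 2
  have hc : (0 : ℝ) < 2 * σ ^ 2 := by positivity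
  set S := Finset.filter (fun k => ∑ i, k i = l)
      (Fintype.piFinset fun _ : Fin n => Finset.range (l + 1)) with hS
  -- the witness tuple
  set k₀ : Fin n → ℕ := fun i => if i = 0 then l - 1 else if i = 1 then 1 else 0 with hk₀
  have h01 : (0 : Fin n) ≠ 1 := Fin.zero_ne_one
  have hsum : ∀ (g : Fin n → ℝ) (a b : ℝ), g 0 = a → g 1 = b →
      (∀ i, i ≠ 0 → i ≠ 1 → g i = 0) → ∑ i, g i = a + b := by
    intro g a b h0 h1 hz
    rw [← Finset.sum_subset (Finset.subset_univ ({0, 1} : Finset (Fin n)))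
      (fun x _ hx => by
        simp only [Finset.mem_insert, Finset.mem_singleton, not_or] at hx
        exact hz x hx.1 hx.2)]
    rw [Finset.sum_pair h01, h0, h1]
  have hk₀sum : ∑ i, k₀ i = l := by
    rw [← Finset.sum_subset (Finset.subset_univ ({0, 1} : Finset (Fin n)))
      (fun x _ hx => by
        simp only [Finset.mem_insert, Finset.mem_singleton, not_or] at hx
        simp [hk₀, hx.1, hx.2])]
    rw [Finset.sum_pair h01]
    simp [hk₀, h01, h01.symm]
    omega
  have hk₀mem : k₀ ∈ S := by
    rw [hS, Finset.mem_filter, Fintype.mem_piFinset]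
    refine ⟨fun i => ?_, hk₀sum⟩
    simp only [Finset.mem_range, hk₀]
    split_ifs <;> omega
  have hk₀sq : ∑ i, (k₀ i : ℝ) ^ 2 = ((l - 1 : ℕ) : ℝ) ^ 2 + 1 := by
    exact hsum (fun i => (k₀ i : ℝ) ^ 2) _ _ (by simp [hk₀, h01]) (by simp [hk₀, h01])
      (fun i hi0 hi1 => by simp [hk₀, hi0, hi1])
  -- strict witness inequality
  have hl2 : (2 : ℝ) ≤ (l : ℝ) := by exact_mod_cast hl
  have hwit : ∑ i, (k₀ i : ℝ) ^ 2 < (l : ℝ) ^ 2 := by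
    rw [hk₀sq, Nat.cast_sub (by omega : 1 ≤ l)]
    push_cast
    nlinarith
  have hbound : ∀ k ∈ S, ∑ i, (k i : ℝ) ^ 2 ≤ (l : ℝ) ^ 2 := by
    intro k hk
    rw [hS, Finset.mem_filter, Fintype.mem_piFinset] at hk
    obtain ⟨hkr, hks⟩ := hk
    calc ∑ i, (k i : ℝ) ^ 2 ≤ ∑ i, (k i : ℝ) * l := by
          refine Finset.sum_le_sum fun i _ => ?_
          have hki : (k i : ℝ) ≤ l := by
            have := hkr i
            rw [Finset.mem_range] at this
            exact_mod_cast by omega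
          nlinarith [Nat.cast_nonneg (α := ℝ) (k i)]
      _ = (l : ℝ) ^ 2 := by
          rw [← Finset.sum_mul]
          have : ∑ i, ((k i : ℕ) : ℝ) = (l : ℝ) := by exact_mod_cast congrArg Nat.cast hks
          rw [this]; ring
  have hlt : shuffleSum σ l n < (n : ℝ) ^ l * Real.exp ((l : ℝ) ^ 2 / (2 * σ ^ 2)) := by
    have hmain : shuffleSum σ l n <
        ∑ k ∈ S, (Nat.multinomial Finset.univ k : ℝ) * Real.exp ((l : ℝ) ^ 2 / (2 * σ ^ 2)) := by
      rw [shuffleSum, ← hS]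
      refine Finset.sum_lt_sum (fun k hk => ?_) ⟨k₀, hk₀mem, ?_⟩
      · exact mul_le_mul_of_nonneg_left
          (Real.exp_le_exp.2 ((div_le_div_iff_of_pos_right hc).2 (hbound k hk))) (Nat.cast_nonneg _)
      · refine mul_lt_mul_of_pos_left
          (Real.exp_lt_exp.2 ((div_lt_div_iff_of_pos_right hc).2 hwit)) ?_
        exact_mod_cast Nat.multinomial_pos _ _
    rw [← Finset.sum_mul] at hmain
    have hS2 : S = Finset.piAntidiag (Finset.univ : Finset (Fin n)) l :=
      filter_eq_piAntidiag l n
    rw [hS2, sum_multinom] at hmain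
    exact hmain
  have hpos : (0 : ℝ) < Real.exp (-(l : ℝ) / (2 * σ ^ 2)) / (n : ℝ) ^ l := by positivity
  have := mul_lt_mul_of_pos_left hlt hpos
  rw [shuffleF]
  refine this.trans_eq ?_
  have hn0 : ((n : ℝ)) ^ l ≠ 0 := by positivity
  rw [div_mul_eq_mul_div, mul_comm ((n:ℝ)^l), ← mul_assoc, mul_div_assoc,
    div_self hn0, mul_one, ← Real.exp_add]
  congr 1
  field_simp
  ring
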